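/- arXiv:2012.14017 — 2 statements merged into one kernel-verified Lean document; each statement's English description precedes it below -/
import Mathlib

section
/- Let g : ℝᵖ → ℝ ∪ {+∞} be proper, lsc, convex and differentiable on Ω = int(dom g). Then the conjugate g* is strictly convex on every convex subset C of ∇g(Ω). -/
open scoped InnerProductSpace
noncomputable section

/-- A proper extended-real-valued function: never `⊥` and finite somewhere. -/
def ProperE {V : Type*} (f : V → EReal) : Prop := (∀ x, f x ≠ ⊥) ∧ ∃ x, f x ≠ ⊤

/-- Convexity of an extended-real-valued function, via convexity of its epigraph. -/
def ConvexFnE {V : Type*} [AddCommGroup V] [Module ℝ V] (f : V → EReal) : Prop :=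
  Convex ℝ {q : V × ℝ | f q.1 ≤ (q.2 : EReal)}

/-- Fenchel conjugate of an extended-real-valued function on an inner product space. -/
def econj {V : Type*} [NormedAddCommGroup V] [InnerProductSpace ℝ V]
    (f : V → EReal) (y : V) : EReal :=
  ⨆ x, ((⟪x, y⟫_ℝ : ℝ) : EReal) - f x

/-! At `x ∈ Ω` the gradient `∇g(x)` is a subgradient, by convexity of the epigraph along segments
from `x`; hence the Fenchel–Young equality `g*(∇g(x)) = ⟪x, ∇g(x)⟫ - g(x)` holds. Conversely any `w`
satisfying the Fenchel–Young equality at `x` is a subgradient there, so `x` minimises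
`g - ⟪w, ·⟫` locally and `w = ∇g(x)`. Now write `t y₁ + (1 - t) y₂ = ∇g(x)`: the affine minorant
`⟪x, ·⟫ - g(x)` of `g*` touches `g*` at this point but lies strictly below it at `y₁, y₂`, which
differ from `∇g(x)`; so `g*` lies strictly below its chord. -/

open Filter Topology

lemma ConvexFnE.apply_add_smul_sub_le {V : Type*} [AddCommGroup V] [Module ℝ V] {f : V → EReal}
    (hf : ConvexFnE f) {x z : V} {a b : ℝ} (hx : f x ≤ a) (hz : f z ≤ b) {t : ℝ}
    (ht₀ : 0 ≤ t) (ht₁ : t ≤ 1) :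
    f (x + t • (z - x)) ≤ ((a + t * (b - a) : ℝ) : EReal) := by
  have h := hf (x := (x, a)) (y := (z, b)) hx hz (sub_nonneg.2 ht₁) ht₀ (by ring)
  have hcomb : (1 - t) • (x, a) + t • (z, b) = (x + t • (z - x), a + t * (b - a)) := by
    ext
    · simp only [Prod.fst_add, Prod.smul_fst]; module
    · simp only [Prod.snd_add, Prod.smul_snd, smul_eq_mul]; ring
  rwa [hcomb] at h

section Conjugate

variable {V : Type*} [NormedAddCommGroup V] [InnerProductSpace ℝ V]

lemma inner_sub_le_econj (f : V → EReal) (x y : V) :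
    ((⟪x, y⟫_ℝ : ℝ) : EReal) - f x ≤ econj f y :=
  le_iSup (fun z => ((⟪z, y⟫_ℝ : ℝ) : EReal) - f z) x

lemma econj_le_iff_forall_le (f : V → EReal) (x y : V) (a : ℝ) :
    econj f y ≤ ((⟪x, y⟫_ℝ - a : ℝ) : EReal) ↔
      ∀ z, ((a + ⟪y, z - x⟫_ℝ : ℝ) : EReal) ≤ f z := by
  refine iSup_le_iff.trans (forall_congr' fun z => ?_)
  rw [EReal.sub_le_iff_le_add (.inr (EReal.coe_ne_top _)) (.inr (EReal.coe_ne_bot _)),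
    add_comm, ← EReal.sub_le_iff_le_add (.inl (EReal.coe_ne_bot _)) (.inl (EReal.coe_ne_top _)),
    ← EReal.coe_sub, inner_sub_right, real_inner_comm x y, real_inner_comm z y]
  ring_nf

lemma econj_eq_of_forall_le {f : V → EReal} {x y : V} {a : ℝ} (hx : f x = a)
    (hy : ∀ z, ((a + ⟪y, z - x⟫_ℝ : ℝ) : EReal) ≤ f z) :
    econj f y = ((⟪x, y⟫_ℝ - a : ℝ) : EReal) :=
  le_antisymm ((econj_le_iff_forall_le f x y a).2 hy) (by simpa [hx] using inner_sub_le_econj f x y)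

variable [CompleteSpace V]

lemma ConvexFnE.add_inner_le {f : V → EReal} (hf : ConvexFnE f) {G : V → ℝ} {x y z : V}
    (hfG : ∀ᶠ u in 𝓝 x, f u = G u) (hG : HasGradientAt G y x) {r : ℝ} (hz : f z ≤ r) :
    G x + ⟪y, z - x⟫_ℝ ≤ r := by
  set c : ℝ → V := fun t => x + t • (z - x)
  have hc : HasDerivAt c (z - x) 0 := by
    simpa only [id, one_smul] using ((hasDerivAt_id (0 : ℝ)).smul_const (z - x)).const_add x
  have hGc : HasDerivAt (G ∘ c) ⟪y, z - x⟫_ℝ 0 := by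
    have hG' : HasFDerivAt G (InnerProductSpace.toDual ℝ V y) (c 0) := by
      simpa [c] using hG.hasFDerivAt
    exact hG'.comp_hasDerivAt 0 hc
  have hslope : ∀ᶠ t in 𝓝[>] (0 : ℝ), slope (G ∘ c) 0 t ≤ r - G x := by
    have hfGc : ∀ᶠ t in 𝓝 (0 : ℝ), f (c t) = G (c t) :=
      hc.continuousAt.eventually (by simpa [c] using hfG)
    filter_upwards [nhdsWithin_le_nhds hfGc, nhdsWithin_le_nhds (eventually_lt_nhds one_pos),
      self_mem_nhdsWithin] with t hft ht₁ (ht₀ : 0 < t)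
    have hle := hf.apply_add_smul_sub_le (hfG.self_of_nhds.le) hz ht₀.le ht₁.le
    rw [show f (x + t • (z - x)) = G (c t) from hft, EReal.coe_le_coe_iff] at hle
    rw [slope_def_field, sub_zero, div_le_iff₀ ht₀]
    simp only [Function.comp, c, zero_smul, add_zero] at hle ⊢
    linarith
  exact le_sub_iff_add_le'.1 <|
    le_of_tendsto (hGc.tendsto_slope.mono_left (nhdsGT_le_nhdsNE 0)) hslope

lemma ConvexFnE.forall_le_of_hasGradientAt {f : V → EReal} (hf : ConvexFnE f) {G : V → ℝ}
    {x y : V} (hfG : ∀ᶠ u in 𝓝 x, f u = G u) (hG : HasGradientAt G y x) (z : V) :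
    ((G x + ⟪y, z - x⟫_ℝ : ℝ) : EReal) ≤ f z :=
  EReal.le_of_forall_lt_iff_le.1 fun _ hr => EReal.coe_le_coe_iff.2 (hf.add_inner_le hfG hG hr.le)

lemma ConvexFnE.econj_eq_of_hasGradientAt {f : V → EReal} (hf : ConvexFnE f) {G : V → ℝ}
    {x y : V} (hfG : ∀ᶠ u in 𝓝 x, f u = G u) (hG : HasGradientAt G y x) :
    econj f y = ((⟪x, y⟫_ℝ - G x : ℝ) : EReal) :=
  econj_eq_of_forall_le hfG.self_of_nhds (hf.forall_le_of_hasGradientAt hfG hG)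

lemma eq_of_hasGradientAt_of_forall_le {f : V → EReal} {G : V → ℝ} {x y w : V}
    (hfG : ∀ᶠ u in 𝓝 x, f u = G u) (hG : HasGradientAt G y x)
    (hw : ∀ z, ((G x + ⟪w, z - x⟫_ℝ : ℝ) : EReal) ≤ f z) : w = y := by
  have hmin : IsLocalMin (fun u => G u - ⟪w, u⟫_ℝ) x := by
    filter_upwards [hfG] with u hu
    have hwu := hw u
    rw [hu, EReal.coe_le_coe_iff, inner_sub_right] at hwu
    linarith
  have h0 := hmin.hasFDerivAt_eq_zero
    (hG.hasFDerivAt.sub (InnerProductSpace.toDual ℝ V w).hasFDerivAt)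
  rw [← map_sub, LinearIsometryEquiv.map_eq_zero_iff, sub_eq_zero] at h0
  exact h0.symm

lemma inner_sub_lt_econj_of_hasGradientAt {f : V → EReal} {G : V → ℝ} {x y w : V}
    (hfG : ∀ᶠ u in 𝓝 x, f u = G u) (hG : HasGradientAt G y x) (hw : w ≠ y) :
    ((⟪x, w⟫_ℝ - G x : ℝ) : EReal) < econj f w := by
  refine lt_of_le_of_ne (by simpa [hfG.self_of_nhds] using inner_sub_le_econj f x w) fun h => hw ?_
  exact eq_of_hasGradientAt_of_forall_le hfG hG ((econj_le_iff_forall_le f x w (G x)).1 h.ge)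

end Conjugate

theorem conjugate_strictly_convex_on_gradient_image_general (p : ℕ)
    (g : EuclideanSpace ℝ (Fin p) → EReal)
    (hconv : ConvexFnE g)
    (G : EuclideanSpace ℝ (Fin p) → ℝ) (gr : EuclideanSpace ℝ (Fin p) → EuclideanSpace ℝ (Fin p))
    (Ω : Set (EuclideanSpace ℝ (Fin p))) (hΩ : Ω = interior {x | g x ≠ ⊤})
    (hG : ∀ x ∈ Ω, g x = ((G x : ℝ) : EReal))
    (hgrad : ∀ x ∈ Ω, HasGradientAt G (gr x) x) :
    ∀ C ⊆ gr '' Ω, Convex ℝ C →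
      ∀ y₁ ∈ C, ∀ y₂ ∈ C, y₁ ≠ y₂ → ∀ t : ℝ, t ∈ Set.Ioo (0 : ℝ) 1 →
        econj g (t • y₁ + (1 - t) • y₂)
          < ((t : ℝ) : EReal) * econj g y₁ + ((1 - t : ℝ) : EReal) * econj g y₂ := by
  intro C hC hCconv y₁ hy₁ y₂ hy₂ hne t ⟨ht₀, ht₁⟩
  have hgG : ∀ x ∈ Ω, ∀ᶠ u in 𝓝 x, g u = G u := fun x hx =>
    eventually_of_mem ((hΩ ▸ isOpen_interior : IsOpen Ω).mem_nhds hx) hG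
  have hy : t • y₁ + (1 - t) • y₂ = AffineMap.lineMap y₂ y₁ t := by
    rw [AffineMap.lineMap_apply_module, add_comm]
  obtain ⟨x, hx, hxy⟩ := hC (hCconv hy₁ hy₂ ht₀.le (sub_nonneg.2 ht₁.le) (by ring))
  obtain ⟨x₁, hx₁, rfl⟩ := hC hy₁
  obtain ⟨x₂, hx₂, rfl⟩ := hC hy₂
  have hconj : ∀ u ∈ Ω, econj g (gr u) = ((⟪u, gr u⟫_ℝ - G u : ℝ) : EReal) := fun u hu =>
    hconv.econj_eq_of_hasGradientAt (hgG u hu) (hgrad u hu)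
  have h₁ := inner_sub_lt_econj_of_hasGradientAt (hgG x hx) (hgrad x hx) (w := gr x₁)
    (by rw [hxy, hy, ne_comm]; simp [hne.symm, ht₁.ne])
  have h₂ := inner_sub_lt_econj_of_hasGradientAt (hgG x hx) (hgrad x hx) (w := gr x₂)
    (by rw [hxy, hy, ne_comm]; simp [hne.symm, ht₀.ne'])
  rw [hconj x₁ hx₁, EReal.coe_lt_coe_iff] at h₁
  rw [hconj x₂ hx₂, EReal.coe_lt_coe_iff] at h₂
  rw [← hxy, hconj x hx, hconj x₁ hx₁, hconj x₂ hx₂, hxy]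
  norm_cast
  rw [inner_add_right, real_inner_smul_right, real_inner_smul_right]
  linarith [mul_lt_mul_of_pos_left h₁ ht₀, mul_lt_mul_of_pos_left h₂ (sub_pos.2 ht₁)]

/-- If `g` is proper lsc convex and differentiable on `Ω = int(dom g)` (with finite values
`G` and gradient map `gr` there), then `g*` is strictly convex on every convex
subset `C ⊆ ∇g(Ω)`. -/
theorem conjugate_strictly_convex_on_gradient_image (p : ℕ)
    (g : EuclideanSpace ℝ (Fin p) → EReal)
    (hproper : ProperE g) (hlsc : LowerSemicontinuous g) (hconv : ConvexFnE g)
    (G : EuclideanSpace ℝ (Fin p) → ℝ) (gr : EuclideanSpace ℝ (Fin p) → EuclideanSpace ℝ (Fin p))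
    (Ω : Set (EuclideanSpace ℝ (Fin p))) (hΩ : Ω = interior {x | g x ≠ ⊤})
    (hG : ∀ x ∈ Ω, g x = ((G x : ℝ) : EReal))
    (hgrad : ∀ x ∈ Ω, HasGradientAt G (gr x) x) :
    ∀ C ⊆ gr '' Ω, Convex ℝ C →
      ∀ y₁ ∈ C, ∀ y₂ ∈ C, y₁ ≠ y₂ → ∀ t : ℝ, t ∈ Set.Ioo (0 : ℝ) 1 →
        econj g (t • y₁ + (1 - t) • y₂)
          < ((t : ℝ) : EReal) * econj g y₁ + ((1 - t : ℝ) : EReal) * econj g y₂ :=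
  conjugate_strictly_convex_on_gradient_image_general p g hconv G gr Ω hΩ hG hgrad
end
end

section
/- A proper, lsc, convex function g : ℝᵖ → ℝ with full domain is differentiable with L-Lipschitz gradient (L > 0) if and only if its conjugate g* is (1/L)-strongly convex. -/
open scoped InnerProductSpace
noncomputable section

/-- `m`-strong convexity of an extended-real-valued function:
`g − (m/2)‖·‖²` is convex. -/
def StrongConvexE {V : Type*} [NormedAddCommGroup V] [NormedSpace ℝ V]
    (m : ℝ) (g : V → EReal) : Prop :=
  ConvexFnE (fun x => g x - ((m / 2 * ‖x‖ ^ 2 : ℝ) : EReal))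

/-!
If `∇g` is `L`-Lipschitz, then at every `x` the function `g` lies below the quadratic
`z ↦ g x + ⟪z - x, ∇g x⟫ + (L/2)‖z - x‖²`; conjugating these bounds exhibits
`g* - ‖·‖²/(2L)` as a supremum of affine functions, hence convex.

Conversely, pick a subgradient `u x` of `g` at every `x` (Hahn–Banach on the strict epigraph).
The conjugate `g*` is attained at `u w` by `w`, so convexity of `g* - ‖·‖²/(2L)` along the segment
from `u z` to `u w`, pushed to the endpoint, gives the strengthened subgradient inequality
`g z + ⟪w - z, u z⟫ + ‖u w - u z‖²/(2L) ≤ g w`. Adding it to its mirror image makes `u`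
`(1/L)`-cocoercive, hence `L`-Lipschitz, and a subgradient selection that is Lipschitz is the
gradient.
-/
variable {V : Type*} [NormedAddCommGroup V] [InnerProductSpace ℝ V]

def epigraphConjSubSq (m : ℝ) (g : V → ℝ) : Set (V × ℝ) :=
  {q | ∀ x, ⟪x, q.1⟫_ℝ - g x - m / 2 * ‖q.1‖ ^ 2 ≤ q.2}

lemma econj_coe_sub_coe_le_coe_iff (g : V → ℝ) (y : V) (c r : ℝ) :
    econj (fun x => (g x : EReal)) y - c ≤ r ↔ ∀ x, ⟪x, y⟫_ℝ - g x - c ≤ r := by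
  rw [EReal.sub_le_iff_le_add (.inl (EReal.coe_ne_bot c)) (.inl (EReal.coe_ne_top c)),
    ← EReal.coe_add, econj, iSup_le_iff]
  refine forall_congr' fun x => ?_
  rw [← EReal.coe_sub, EReal.coe_le_coe_iff]
  constructor <;> intro h <;> linarith

lemma strongConvexE_econj_iff (m : ℝ) (g : V → ℝ) :
    StrongConvexE m (econj fun x => (g x : EReal)) ↔ Convex ℝ (epigraphConjSubSq m g) := by
  simp only [StrongConvexE, ConvexFnE, econj_coe_sub_coe_le_coe_iff]
  rfl

lemma convex_setOf_forall_inner_add_le {ι : Sort*} (a : ι → V) (c : ι → ℝ) :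
    Convex ℝ {q : V × ℝ | ∀ i, ⟪a i, q.1⟫_ℝ + c i ≤ q.2} := by
  rintro ⟨y, r⟩ hq ⟨y', r'⟩ hq' s t hs ht hst i
  simp only [Prod.smul_mk, Prod.mk_add_mk, smul_eq_mul, inner_add_right,
    real_inner_smul_right]
  linear_combination s * hq i + t * hq' i - c i * hst

lemma le_add_inner_gradient_add_sq [CompleteSpace V] {L : ℝ} {g : V → ℝ}
    (hdiff : Differentiable ℝ g) (hlip : ∀ x y, ‖gradient g x - gradient g y‖ ≤ L * ‖x - y‖)
    (x z : V) : g z ≤ g x + ⟪z - x, gradient g x⟫_ℝ + L / 2 * ‖z - x‖ ^ 2 := by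
  set d := z - x
  set ψ : ℝ → ℝ := fun t => g (x + t • d) - t * ⟪d, gradient g x⟫_ℝ - L / 2 * t ^ 2 * ‖d‖ ^ 2
  have hψ : ∀ t, HasDerivAt ψ
      (⟪gradient g (x + t • d) - gradient g x, d⟫_ℝ - L * t * ‖d‖ ^ 2) t := by
    intro t
    have hline : HasDerivAt (fun t : ℝ => x + t • d) d t := by
      simpa using ((hasDerivAt_id t).smul_const d).const_add x
    have hcomp : HasDerivAt (fun t : ℝ => g (x + t • d)) ⟪gradient g (x + t • d), d⟫_ℝ t :=
      (hdiff _).hasGradientAt.hasFDerivAt.comp_hasDerivAt t hline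
    have hlin := (hasDerivAt_id t).mul_const ⟪d, gradient g x⟫_ℝ
    have hquad := ((hasDerivAt_pow 2 t).const_mul (L / 2)).mul_const (‖d‖ ^ 2)
    refine ((hcomp.sub hlin).sub hquad).congr_deriv ?_
    simp only [inner_sub_right, real_inner_comm d]
    ring
  have hψ_anti : AntitoneOn ψ (Set.Icc 0 1) := by
    refine antitoneOn_of_deriv_nonpos (convex_Icc 0 1)
      (fun t _ => (hψ t).continuousAt.continuousWithinAt)
      (fun t _ => (hψ t).differentiableAt.differentiableWithinAt) fun t ht => ?_
    rw [interior_Icc] at ht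
    have hstep : ‖gradient g (x + t • d) - gradient g x‖ ≤ L * (t * ‖d‖) := by
      simpa [norm_smul, abs_of_pos ht.1] using hlip (x + t • d) x
    rw [(hψ t).deriv, sub_nonpos]
    calc _ ≤ ‖gradient g (x + t • d) - gradient g x‖ * ‖d‖ := real_inner_le_norm _ _
      _ ≤ L * (t * ‖d‖) * ‖d‖ := by gcongr
      _ = _ := by ring
  have := hψ_anti (by simp) (by simp) zero_le_one
  simp only [ψ, one_smul, zero_smul, add_zero, d, add_sub_cancel] at this
  linarith

lemma convex_epigraphConjSubSq_of_le_quadratic {L : ℝ} (hL : 0 < L) {g : V → ℝ} (v : V → V)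
    (hv : ∀ x z, g z ≤ g x + ⟪z - x, v x⟫_ℝ + L / 2 * ‖z - x‖ ^ 2) :
    Convex ℝ (epigraphConjSubSq (1 / L) g) := by
  suffices epigraphConjSubSq (1 / L) g =
      {q | ∀ x, ⟪x - L⁻¹ • v x, q.1⟫_ℝ + (‖v x‖ ^ 2 / (2 * L) - g x) ≤ q.2} from
    this ▸ convex_setOf_forall_inner_add_le _ _
  ext ⟨y, r⟩
  refine ⟨fun h x => ?_, fun h x => ?_⟩
  · -- `z = x + L⁻¹ • (y - v x)` maximises `⟪z, y⟫` minus the quadratic bound on `g z` at `x`.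
    have hz := hv x (x + L⁻¹ • (y - v x))
    have hy := h (x + L⁻¹ • (y - v x))
    simp only [add_sub_cancel_left, norm_smul, mul_pow, real_inner_smul_left, inner_add_left,
      inner_sub_left, norm_sub_sq_real, real_inner_self_eq_norm_sq,
      Real.norm_eq_abs, sq_abs] at hz hy ⊢
    field_simp at hz hy ⊢
    linarith
  · have hsq : 0 ≤ ‖y - v x‖ ^ 2 / (2 * L) := by positivity
    have hx := h x
    simp only [inner_sub_left, real_inner_smul_left, norm_sub_sq_real] at hsq hx
    rw [real_inner_comm y (v x)] at hx
    field_simp at hsq hx ⊢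
    linarith

lemma ConvexOn.exists_dual_subgradient {E : Type*} [NormedAddCommGroup E] [NormedSpace ℝ E]
    {g : E → ℝ} (hconv : ConvexOn ℝ Set.univ g) (hcont : Continuous g) (x₀ : E) :
    ∃ l : StrongDual ℝ E, ∀ x, g x₀ + l (x - x₀) ≤ g x := by
  obtain ⟨f, hf⟩ := geometric_hahn_banach_point_open hconv.convex_strict_epigraph
    (by simpa using isOpen_lt (hcont.comp continuous_fst) continuous_snd)
    (by simp : (x₀, g x₀) ∉ {p : E × ℝ | p.1 ∈ Set.univ ∧ g p.1 < p.2})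
  set φ := f.comp (ContinuousLinearMap.inl ℝ E ℝ)
  set β := f (0, 1)
  have hf_apply : ∀ x t, f (x, t) = φ x + t * β := fun x t => by
    rw [show ((x, t) : E × ℝ) = (x, 0) + t • (0, 1) by simp, map_add, map_smul, smul_eq_mul]
    rfl
  have hsep : ∀ x t, g x < t → φ x₀ + g x₀ * β < φ x + t * β := fun x t ht => by
    simpa only [hf_apply] using hf (x, t) ⟨Set.mem_univ x, ht⟩
  have hβ : 0 < β := by nlinarith [hsep x₀ (g x₀ + 1) (by linarith)]
  refine ⟨-β⁻¹ • φ, fun x => le_of_forall_gt_imp_ge_of_dense fun t ht => ?_⟩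
  have hlt : β⁻¹ * (φ x₀ - φ x) ≤ t - g x₀ := by
    rw [inv_mul_le_iff₀ hβ]
    linarith [hsep x t ht]
  simp only [FunLike.coe_smul, Pi.smul_apply, map_sub, smul_eq_mul]
  linarith

lemma exists_subgradient [CompleteSpace V] {g : V → ℝ} (hconv : ConvexOn ℝ Set.univ g)
    (hcont : Continuous g) (x₀ : V) : ∃ u : V, ∀ x, g x₀ + ⟪x - x₀, u⟫_ℝ ≤ g x := by
  obtain ⟨l, hl⟩ := hconv.exists_dual_subgradient hcont x₀
  refine ⟨(InnerProductSpace.toDual ℝ V).symm l, fun x => ?_⟩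
  rw [real_inner_comm, InnerProductSpace.toDual_symm_apply]
  exact hl x

lemma add_inner_add_sq_le_of_convex_epigraphConjSubSq {m : ℝ} {g : V → ℝ}
    (hS : Convex ℝ (epigraphConjSubSq m g)) {u : V → V}
    (hu : ∀ z x, g z + ⟪x - z, u z⟫_ℝ ≤ g x) (z w : V) :
    g z + ⟪w - z, u z⟫_ℝ + m / 2 * ‖u w - u z‖ ^ 2 ≤ g w := by
  have hmem : ∀ w, (u w, ⟪w, u w⟫_ℝ - g w - m / 2 * ‖u w‖ ^ 2) ∈ epigraphConjSubSq m g :=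
    fun w x => by linarith [hu w x, inner_sub_left (𝕜 := ℝ) x w (u w)]
  set c := m / 2 * ‖u w - u z‖ ^ 2
  have hθ : ∀ θ ∈ Set.Ico (0 : ℝ) 1, θ * c ≤ g w - g z - ⟪w - z, u z⟫_ℝ := by
    rintro θ ⟨hθ0, hθ1⟩
    have hcomb := hS (hmem w) (hmem z) hθ0 (sub_nonneg.2 hθ1.le) (add_sub_cancel θ 1) w
    simp only [Prod.smul_mk, Prod.mk_add_mk, smul_eq_mul, inner_add_right,
      real_inner_smul_right, norm_add_sq_real, norm_smul, real_inner_smul_left, mul_pow,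
      Real.norm_eq_abs, sq_abs] at hcomb
    have hprod : (1 - θ) * (θ * c - (g w - g z - ⟪w - z, u z⟫_ℝ)) ≤ 0 := by
      simp only [c, norm_sub_sq_real, inner_sub_left]
      linear_combination hcomb
    nlinarith
  have hlim : Filter.Tendsto (fun θ : ℝ => θ * c) (nhdsWithin 1 (Set.Iio 1)) (nhds (1 * c)) :=
    ((continuous_mul_const c).tendsto 1).mono_left nhdsWithin_le_nhds
  have := le_of_tendsto hlim (Filter.eventually_of_mem (Ico_mem_nhdsLT zero_lt_one) hθ)
  linarith

lemma norm_sub_le_of_add_inner_add_sq_le {m : ℝ} (hm : 0 < m) {g : V → ℝ} {u : V → V}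
    (h : ∀ z w, g z + ⟪w - z, u z⟫_ℝ + m / 2 * ‖u w - u z‖ ^ 2 ≤ g w) (z w : V) :
    ‖u w - u z‖ ≤ m⁻¹ * ‖w - z‖ := by
  have hcoco : m * ‖u w - u z‖ ^ 2 ≤ ⟪w - z, u w - u z⟫_ℝ := by
    have h₁ := h z w
    have h₂ := h w z
    rw [norm_sub_rev, ← neg_sub w z, inner_neg_left] at h₂
    rw [inner_sub_right]
    linarith
  rw [le_inv_mul_iff₀ hm]
  rcases (norm_nonneg (u w - u z)).eq_or_lt with h0 | hpos
  · rw [← h0, mul_zero]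
    exact norm_nonneg _
  · refine le_of_mul_le_mul_right ?_ hpos
    calc m * ‖u w - u z‖ * ‖u w - u z‖ = m * ‖u w - u z‖ ^ 2 := by ring
      _ ≤ ⟪w - z, u w - u z⟫_ℝ := hcoco
      _ ≤ ‖w - z‖ * ‖u w - u z‖ := real_inner_le_norm _ _

lemma hasGradientAt_of_abs_sub_inner_le [CompleteSpace V] {g : V → ℝ} {u z : V} (C : ℝ)
    (h : ∀ x, |g x - g z - ⟪u, x - z⟫_ℝ| ≤ C * ‖x - z‖ ^ 2) : HasGradientAt g u z := by
  rw [hasGradientAt_iff_isLittleO]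
  refine (Asymptotics.IsBigO.of_bound C (Filter.Eventually.of_forall fun x => ?_)).trans_isLittleO
    (Asymptotics.isLittleO_pow_sub_sub z one_lt_two)
  simpa using h x

lemma hasGradientAt_of_subgradient_lipschitz [CompleteSpace V] {g : V → ℝ} {u : V → V} {L : ℝ}
    (hu : ∀ z x, g z + ⟪x - z, u z⟫_ℝ ≤ g x) (hlip : ∀ z w, ‖u w - u z‖ ≤ L * ‖w - z‖)
    (z : V) : HasGradientAt g (u z) z := by
  refine hasGradientAt_of_abs_sub_inner_le L fun x => ?_
  rw [real_inner_comm]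
  have hupper : g x - g z - ⟪x - z, u z⟫_ℝ ≤ ‖x - z‖ * ‖u x - u z‖ := by
    have := hu x z
    rw [← neg_sub x z, inner_neg_left] at this
    calc g x - g z - ⟪x - z, u z⟫_ℝ ≤ ⟪x - z, u x - u z⟫_ℝ := by rw [inner_sub_right]; linarith
      _ ≤ ‖x - z‖ * ‖u x - u z‖ := real_inner_le_norm _ _
  have hlip' : ‖x - z‖ * ‖u x - u z‖ ≤ L * ‖x - z‖ ^ 2 := by
    calc ‖x - z‖ * ‖u x - u z‖ ≤ ‖x - z‖ * (L * ‖x - z‖) := by gcongr; exact hlip z x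
      _ = L * ‖x - z‖ ^ 2 := by ring
  have hnonneg : 0 ≤ ‖x - z‖ * ‖u x - u z‖ := by positivity
  exact abs_le.2 ⟨by linarith [hu z x], hupper.trans hlip'⟩

/-- A convex `g : ℝᵖ → ℝ` (full domain) is differentiable with `L`-Lipschitz gradient iff
its conjugate `g*` is `(1/L)`-strongly convex. -/
theorem lipschitz_gradient_iff_conjugate_strongly_convex (p : ℕ) (L : ℝ) (hL : 0 < L)
    (g : EuclideanSpace ℝ (Fin p) → ℝ) (hconv : ConvexOn ℝ Set.univ g) :
    (Differentiable ℝ g ∧ ∀ x y, ‖gradient g x - gradient g y‖ ≤ L * ‖x - y‖) ↔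
      StrongConvexE (1 / L) (econj (fun x => ((g x : ℝ) : EReal))) := by
  rw [strongConvexE_econj_iff]
  constructor
  · rintro ⟨hdiff, hlip⟩
    exact convex_epigraphConjSubSq_of_le_quadratic hL (gradient g)
      (le_add_inner_gradient_add_sq hdiff hlip)
  · intro hS
    choose u hu using
      exists_subgradient hconv (continuousOn_univ.1 (hconv.continuousOn isOpen_univ))
    have hlip : ∀ z w, ‖u w - u z‖ ≤ L * ‖w - z‖ := by
      simpa using norm_sub_le_of_add_inner_add_sq_le (one_div_pos.2 hL)
        (add_inner_add_sq_le_of_convex_epigraphConjSubSq hS hu)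
    have hgrad := hasGradientAt_of_subgradient_lipschitz hu hlip
    refine ⟨fun z => (hgrad z).differentiableAt, fun x y => ?_⟩
    rw [(hgrad x).gradient, (hgrad y).gradient]
    exact hlip y x
end
end
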